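/- Let A be a monotone subset of an ordered topological vector space X and S a traded asset. Then Interior(A) ⊂ {X : ρ_{A,S}(X) < 0} ⊂ A ⊂ {X : ρ_{A,S}(X) ≤ 0} ⊂ closure(A), and {X : ρ_{A,S}(X) = 0} ⊂ ∂A. -/

import Mathlib

open Filter Topology

variable {X : Type*} [AddCommGroup X] [Module ℝ X] [PartialOrder X]
  [CovariantClass X X (· + ·) (· ≤ ·)] [PosSMulMono ℝ X]
  [TopologicalSpace X] [IsTopologicalAddGroup X] [ContinuousSMul ℝ X]

/-- The risk measure `ρ_{A,S}(x) = inf {m : x + (m/S₀)·S_T ∈ A}`, valued in `EReal`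
(with `inf ∅ = ⊤` and unbounded-below giving `⊥`). -/
noncomputable def rho (A : Set X) (S0 : ℝ) (ST : X) (x : X) : EReal :=
  sInf ((fun r : ℝ => (r : EReal)) '' {r : ℝ | x + (r / S0) • ST ∈ A})

/-- A set is monotone if it contains, with any element, every larger element. -/
def MonotoneSet (A : Set X) : Prop := ∀ x ∈ A, ∀ y, x ≤ y → y ∈ A

/-- An acceptance set: nonempty, proper, and monotone. -/
def AcceptanceSet (A : Set X) : Prop := A.Nonempty ∧ A ≠ Set.univ ∧ MonotoneSet A

/-- The algebraic core (algebraic interior) of a set. -/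
def algCore (A : Set X) : Set X :=
  {x | ∀ y : X, ∃ ε > 0, ∀ l : ℝ, |l| < ε → x + l • y ∈ A}

/-!
Write `x_r = x + (r/S₀)·S_T`. Since `S_T ≥ 0` and `A` is monotone, `{r | x_r ∈ A}` is an
up-set of `ℝ` with infimum `ρ(x)`, so `ρ(x) < r` forces `x_r ∈ A`. If `x` is interior,
`x_r ∈ A` already for some `r < 0`; if `ρ(x) ≤ 0`, then `x_r ∈ A` for every `r > 0` and
`x_r → x` as `r → 0⁺`. The boundary statement combines the two.
-/

section

variable {E : Type*} [AddCommGroup E] [Module ℝ E] {A : Set E} {S0 : ℝ} {ST x : E}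

theorem MonotoneSet.add_div_smul_mem_of_le [PartialOrder E] [AddLeftMono E] [PosSMulMono ℝ E]
    (hA : MonotoneSet A) (hS0 : 0 ≤ S0) (hST : 0 ≤ ST) {r r' : ℝ}
    (h : x + (r / S0) • ST ∈ A) (hrr' : r ≤ r') : x + (r' / S0) • ST ∈ A := by
  have hshift : x + (r' / S0) • ST = x + (r / S0) • ST + ((r' - r) / S0) • ST := by
    rw [add_assoc, ← add_smul, ← add_div, add_sub_cancel]
  have hpos : 0 ≤ ((r' - r) / S0) • ST := smul_nonneg (div_nonneg (sub_nonneg.2 hrr') hS0) hST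
  exact hA _ h _ (hshift ▸ le_add_of_nonneg_right hpos)

theorem rho_le_of_add_div_smul_mem {r : ℝ} (h : x + (r / S0) • ST ∈ A) :
    rho A S0 ST x ≤ r :=
  sInf_le ⟨r, h, rfl⟩

theorem rho_nonpos_of_mem (hx : x ∈ A) : rho A S0 ST x ≤ 0 :=
  rho_le_of_add_div_smul_mem (by simpa using hx)

theorem MonotoneSet.add_div_smul_mem_of_rho_lt [PartialOrder E] [AddLeftMono E]
    [PosSMulMono ℝ E] (hA : MonotoneSet A) (hS0 : 0 ≤ S0) (hST : 0 ≤ ST) {r : ℝ}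
    (h : rho A S0 ST x < r) : x + (r / S0) • ST ∈ A := by
  obtain ⟨_, ⟨r', hr', rfl⟩, hr'r⟩ := sInf_lt_iff.mp h
  exact hA.add_div_smul_mem_of_le hS0 hST hr' (EReal.coe_lt_coe_iff.mp hr'r).le

theorem MonotoneSet.mem_of_rho_neg [PartialOrder E] [AddLeftMono E] [PosSMulMono ℝ E]
    (hA : MonotoneSet A) (hS0 : 0 ≤ S0) (hST : 0 ≤ ST) (hx : rho A S0 ST x < 0) : x ∈ A := by
  simpa using hA.add_div_smul_mem_of_rho_lt hS0 hST hx

theorem rho_neg_of_mem_interior [TopologicalSpace E] [ContinuousAdd E] [ContinuousSMul ℝ E]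
    (hx : x ∈ interior A) : rho A S0 ST x < 0 := by
  have hcont : Continuous fun r : ℝ => x + (r / S0) • ST := by fun_prop
  have hnear : ∀ᶠ r in 𝓝 (0 : ℝ), x + (r / S0) • ST ∈ A :=
    hcont.continuousAt.preimage_mem_nhds (by simpa using mem_interior_iff_mem_nhds.mp hx)
  obtain ⟨r, hr, hr0⟩ :=
    ((hnear.filter_mono nhdsWithin_le_nhds).and (self_mem_nhdsWithin (s := Set.Iio 0))).exists
  exact (rho_le_of_add_div_smul_mem hr).trans_lt (EReal.coe_lt_coe_iff.mpr hr0)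

theorem MonotoneSet.mem_closure_of_rho_nonpos [PartialOrder E] [AddLeftMono E]
    [PosSMulMono ℝ E] [TopologicalSpace E] [ContinuousAdd E] [ContinuousSMul ℝ E]
    (hA : MonotoneSet A) (hS0 : 0 ≤ S0) (hST : 0 ≤ ST) (hx : rho A S0 ST x ≤ 0) :
    x ∈ closure A := by
  have hcont : Continuous fun r : ℝ => x + (r / S0) • ST := by fun_prop
  have hlim : Tendsto (fun r : ℝ => x + (r / S0) • ST) (𝓝[>] 0) (𝓝 x) := by
    simpa using (hcont.tendsto 0).mono_left nhdsWithin_le_nhds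
  refine mem_closure_of_tendsto hlim ?_
  filter_upwards [self_mem_nhdsWithin] with r (hr : 0 < r)
  exact hA.add_div_smul_mem_of_rho_lt hS0 hST (hx.trans_lt (EReal.coe_lt_coe_iff.mpr hr))

end

theorem rho_chain_of_inclusions (A : Set X) (S0 : ℝ) (ST : X)
    (hA : AcceptanceSet A) (hS0 : 0 < S0) (hST : 0 ≤ ST) :
    interior A ⊆ {x : X | rho A S0 ST x < 0} ∧
    {x : X | rho A S0 ST x < 0} ⊆ A ∧
    A ⊆ {x : X | rho A S0 ST x ≤ 0} ∧
    {x : X | rho A S0 ST x ≤ 0} ⊆ closure A ∧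
    {x : X | rho A S0 ST x = 0} ⊆ frontier A := by
  obtain ⟨-, -, hmono⟩ := hA
  have hinterior : interior A ⊆ {x : X | rho A S0 ST x < 0} := fun _ => rho_neg_of_mem_interior
  have hclosure : {x : X | rho A S0 ST x ≤ 0} ⊆ closure A := fun _ =>
    hmono.mem_closure_of_rho_nonpos hS0.le hST
  refine ⟨hinterior, fun _ => hmono.mem_of_rho_neg hS0.le hST, fun _ => rho_nonpos_of_mem,
    hclosure, fun x hx => ⟨hclosure hx.le, fun hint => (hinterior hint).ne hx⟩⟩
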